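/- arXiv:0812.0789 — 3 statements merged into one kernel-verified Lean document; each statement's English description precedes it below -/
import Mathlib

section
/- Let δ_1, ..., δ_M be i.i.d. random variables in [0, S_max] with mean S̄ > 0, and X = Σ δ_i. If M = 2·(S_max/S̄) · max{(S_max/S̄)·ln(1/ε), 1 + N} for N ≥ 0 and 0 < ε < 1, then P(X < (1+N)·S_max) ≤ ε. -/
/-!
Hoeffding's inequality for the centred variables `S̄ - δ_i`, which are independent, have mean zero
and range in an interval of length `S_max`, bounds the probability that the sum falls `t` below
its mean `M S̄` by `exp (-2 t² / (M S_max²))`. The second branch of the maximum places the threshold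
`(1 + N) S_max` below `M S̄ / 2`, so `t ≥ M S̄ / 2` and the bound is at most
`exp (-M S̄² / (2 S_max²))`, which the first branch makes at most `ε`.
-/

open MeasureTheory ProbabilityTheory Real

section Hoeffding

variable {Ω ι : Type*} [MeasurableSpace Ω] {μ : Measure Ω} [IsProbabilityMeasure μ] [Fintype ι]

lemma measureReal_sum_le_sub_le_exp {X : ι → Ω → ℝ} (hind : iIndepFun X μ)
    (hmeas : ∀ i, Measurable (X i)) {a b m t : ℝ} (hbdd : ∀ i, ∀ᵐ ω ∂μ, X i ω ∈ Set.Icc a b)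
    (hmean : ∀ i, μ[X i] = m) (ht : 0 ≤ t) :
    μ.real {ω | ∑ i, X i ω ≤ Fintype.card ι * m - t} ≤
      exp (-2 * t ^ 2 / (Fintype.card ι * (b - a) ^ 2)) := by
  have hsubG : ∀ i ∈ Finset.univ,
      HasSubgaussianMGF (fun ω ↦ m - X i ω) ((‖b - a‖₊ / 2) ^ 2) μ := by
    intro i _
    convert (hasSubgaussianMGF_of_mem_Icc (hmeas i).aemeasurable (hbdd i)).neg using 1
    ext ω
    simp [hmean i]
  have hindY : iIndepFun (fun i ω ↦ m - X i ω) μ :=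
    hind.comp (fun _ x ↦ m - x) fun _ ↦ measurable_const.sub measurable_id
  have hsum := HasSubgaussianMGF.measure_sum_ge_le_of_iIndepFun hindY hsubG ht
  have hset : {ω | ∑ i, X i ω ≤ Fintype.card ι * m - t} = {ω | t ≤ ∑ i, (m - X i ω)} := by
    ext ω
    simp only [Set.mem_ofPred_eq, Finset.sum_sub_distrib, Finset.sum_const, Finset.card_univ,
      nsmul_eq_mul]
    constructor <;> intro h <;> linarith
  have hc : ((‖b - a‖₊ / 2) ^ 2 : NNReal) = ((b - a) / 2) ^ 2 := by
    simp [div_pow, sq_abs]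
  rw [hset]
  convert hsum using 2
  rw [NNReal.coe_sum, hc, Finset.sum_const, Finset.card_univ, nsmul_eq_mul,
    show 2 * (Fintype.card ι * ((b - a) / 2) ^ 2) = Fintype.card ι * (b - a) ^ 2 / 2 by ring,
    div_div_eq_mul_div]
  ring

end Hoeffding

lemma two_mul_le_of_two_mul_div_mul_max_le {M Smax Sbar N L : ℝ} (hSmax : 0 ≤ Smax)
    (hSbar : 0 < Sbar)
    (h : 2 * (Smax / Sbar) * max ((Smax / Sbar) * L) (1 + N) ≤ M) :
    2 * Smax ^ 2 * L ≤ M * Sbar ^ 2 ∧ 2 * (1 + N) * Smax ≤ M * Sbar := by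
  have hratio : 0 ≤ 2 * (Smax / Sbar) := by positivity
  have h₁ := (mul_le_mul_of_nonneg_left (le_max_left _ _) hratio).trans h
  have h₂ := (mul_le_mul_of_nonneg_left (le_max_right _ _) hratio).trans h
  constructor
  · calc 2 * Smax ^ 2 * L = 2 * (Smax / Sbar) * ((Smax / Sbar) * L) * Sbar ^ 2 := by
          field_simp
      _ ≤ M * Sbar ^ 2 := by gcongr
  · calc 2 * (1 + N) * Smax = 2 * (Smax / Sbar) * (1 + N) * Sbar := by
          field_simp
      _ ≤ M * Sbar := by gcongr

lemma exp_neg_two_mul_sq_div_le {n σ s t ε : ℝ} (hn : 0 < n) (hσ : 0 < σ) (hε : 0 < ε)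
    (hs : 0 ≤ s) (hlog : 2 * σ ^ 2 * log (1 / ε) ≤ n * s ^ 2) (ht : n * s / 2 ≤ t) :
    exp (-2 * t ^ 2 / (n * σ ^ 2)) ≤ ε := by
  have hts : (n * s / 2) ^ 2 ≤ t ^ 2 := pow_le_pow_left₀ (by positivity) ht 2
  have hkey : log (1 / ε) * (n * σ ^ 2) ≤ 2 * t ^ 2 := by nlinarith
  rw [← exp_log hε, exp_le_exp, neg_mul, neg_div, neg_le, ← log_inv, ← one_div,
    le_div_iff₀ (by positivity)]
  exact hkey

theorem stmt_4_general {Ω : Type*} [MeasurableSpace Ω] (μ : Measure Ω) [IsProbabilityMeasure μ]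
    (M : ℕ) (hM : 0 < M) (Smax Sbar N ε : ℝ) (hSmax : 0 < Smax) (hSbar : 0 < Sbar)
    (hε : 0 < ε)
    (δ : Fin M → Ω → ℝ) (hmeas : ∀ i, Measurable (δ i))
    (hind : iIndepFun δ μ)
    (hbdd : ∀ i, ∀ᵐ ω ∂μ, δ i ω ∈ Set.Icc 0 Smax)
    (hmean : ∀ i, ∫ ω, δ i ω ∂μ = Sbar)
    (hMbig : 2 * (Smax / Sbar) * max ((Smax / Sbar) * Real.log (1 / ε)) (1 + N) ≤ (M : ℝ)) :
    μ {ω | (∑ i, δ i ω) < (1 + N) * Smax} ≤ ENNReal.ofReal ε := by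
  obtain ⟨hlog, hthreshold⟩ := two_mul_le_of_two_mul_div_mul_max_le hSmax.le hSbar hMbig
  set t := M * Sbar - (1 + N) * Smax
  have ht : M * Sbar / 2 ≤ t := by linarith
  have ht₀ : 0 ≤ t := (by positivity : (0 : ℝ) ≤ M * Sbar / 2).trans ht
  have hsub : {ω | ∑ i, δ i ω < (1 + N) * Smax} ⊆
      {ω | ∑ i, δ i ω ≤ Fintype.card (Fin M) * Sbar - t} := fun ω hω ↦ by
    simp only [Set.mem_ofPred_eq, Fintype.card_fin, t] at hω ⊢
    linarith
  have htail : μ.real {ω | ∑ i, δ i ω ≤ Fintype.card (Fin M) * Sbar - t} ≤ ε := by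
    refine (measureReal_sum_le_sub_le_exp hind hmeas hbdd hmean ht₀).trans ?_
    rw [Fintype.card_fin, sub_zero]
    exact exp_neg_two_mul_sq_div_le (by exact_mod_cast hM) hSmax hε hSbar.le hlog ht
  calc μ {ω | ∑ i, δ i ω < (1 + N) * Smax}
      ≤ μ {ω | ∑ i, δ i ω ≤ Fintype.card (Fin M) * Sbar - t} := measure_mono hsub
    _ = ENNReal.ofReal (μ.real {ω | ∑ i, δ i ω ≤ Fintype.card (Fin M) * Sbar - t}) :=
        (ofReal_measureReal).symm
    _ ≤ ENNReal.ofReal ε := ENNReal.ofReal_le_ofReal htail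

/-- For i.i.d. `δ_i` in `[0, S_max]` with mean `S̄ > 0`, if
`M ≥ 2·(S_max/S̄)·max{(S_max/S̄)·ln(1/ε), 1 + N}` then
`P(Σδ_i < (1+N)·S_max) ≤ ε`. -/
theorem stmt_4 {Ω : Type*} [MeasurableSpace Ω] (μ : Measure Ω) [IsProbabilityMeasure μ]
    (M : ℕ) (hM : 0 < M) (Smax Sbar N ε : ℝ) (hSmax : 0 < Smax) (hSbar : 0 < Sbar)
    (hSle : Sbar ≤ Smax) (hN : 0 ≤ N) (hε : 0 < ε) (hε1 : ε < 1)
    (δ : Fin M → Ω → ℝ) (hmeas : ∀ i, Measurable (δ i))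
    (hind : iIndepFun δ μ)
    (hident : ∀ i, μ.map (δ i) = μ.map (δ ⟨0, hM⟩))
    (hbdd : ∀ i, ∀ᵐ ω ∂μ, δ i ω ∈ Set.Icc 0 Smax)
    (hmean : ∀ i, ∫ ω, δ i ω ∂μ = Sbar)
    (hMbig : 2 * (Smax / Sbar) * max ((Smax / Sbar) * Real.log (1 / ε)) (1 + N) ≤ (M : ℝ)) :
    μ {ω | (∑ i, δ i ω) < (1 + N) * Smax} ≤ ENNReal.ofReal ε :=
  stmt_4_general μ M hM Smax Sbar N ε hSmax hSbar hε δ hmeas hind hbdd hmean hMbig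
end

section
/- Let c_i(m) denote the number of ordered i-tuples (a_1,...,a_i) with each a_j ∈ {2^0,...,2^d} and a_1 + ... + a_i = m. Then c_i(m) is bounded above by a constant C_i depending only on i (not on d or m); in particular, in the binary expansion of m, contracting any run of more than i−1 consecutive zeros to exactly i−1 zeros does not change c_i(m). -/
/-!
Induct on `i`. In a tuple of powers of two summing to `m`, the largest summand `2^e` satisfies
`2^e ≤ m < 2^(e + i)`, so `e` is one of at most `i` values determined by `⌊log₂ m⌋`. Fixing its
position and its exponent leaves an `(i-1)`-tuple summing to `m - 2^e`, whence `c_i ≤ i² c_{i-1}`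
and `c_i ≤ (i!)²`, uniformly in `d` and `m`.
-/

open Finset Nat

theorem exists_two_pow_le_sum_lt {ι : Type*} [Fintype ι] [Nonempty ι] (e : ι → ℕ) :
    ∃ j, 2 ^ e j ≤ ∑ k, 2 ^ e k ∧ ∑ k, 2 ^ e k < 2 ^ (e j + Fintype.card ι) := by
  obtain ⟨j, hj⟩ := Finite.exists_max e
  refine ⟨j, single_le_sum (f := fun k => 2 ^ e k) (fun _ _ => Nat.zero_le _) (mem_univ j), ?_⟩
  calc ∑ k, 2 ^ e k ≤ ∑ _k : ι, 2 ^ e j := sum_le_sum fun k _ => Nat.pow_le_pow_right two_pos (hj k)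
    _ = Fintype.card ι * 2 ^ e j := by rw [sum_const, Finset.card_univ, smul_eq_mul]
    _ < 2 ^ Fintype.card ι * 2 ^ e j := Nat.mul_lt_mul_of_pos_right Nat.lt_two_pow_self (by positivity)
    _ = 2 ^ (e j + Fintype.card ι) := by rw [pow_add, mul_comm]

theorem exists_mem_Icc_log_sum_two_pow {ι : Type*} [Fintype ι] [Nonempty ι] (e : ι → ℕ) :
    ∃ j, e j ∈ Icc (log 2 (∑ k, 2 ^ e k) + 1 - Fintype.card ι) (log 2 (∑ k, 2 ^ e k)) := by
  obtain ⟨j, hle, hlt⟩ := exists_two_pow_le_sum_lt e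
  have hpos : ∑ k, 2 ^ e k ≠ 0 := (Nat.lt_of_lt_of_le (by positivity) hle).ne'
  refine ⟨j, mem_Icc.2 ⟨?_, (le_log_iff_pow_le one_lt_two hpos).2 hle⟩⟩
  have := (log_lt_iff_lt_pow one_lt_two hpos).2 hlt
  omega

/-- The tuples counted by `c_i(m)`, recorded by their exponents. -/
def powSumTuples (i d m : ℕ) : Finset (Fin i → Fin (d + 1)) :=
  {f | ∑ j, 2 ^ (f j : ℕ) = m}

theorem card_powSumTuples_filter_eq_le (i d m : ℕ) (j₀ : Fin (i + 1)) (e : ℕ) :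
    #{f ∈ powSumTuples (i + 1) d m | (f j₀ : ℕ) = e} ≤ #(powSumTuples i d (m - 2 ^ e)) := by
  refine card_le_card_of_injOn (fun f => f ∘ j₀.succAbove) ?_ ?_
  · intro f hf
    simp only [powSumTuples, coe_filter, mem_filter, mem_univ, true_and, Set.mem_ofPred_eq] at hf ⊢
    obtain ⟨hsum, hj₀⟩ := hf
    rw [Fin.sum_univ_succAbove _ j₀, hj₀] at hsum
    simp only [Function.comp_apply]
    omega
  · intro f hf g hg hfg
    simp only [coe_filter] at hf hg
    funext x
    rcases eq_or_ne x j₀ with rfl | hx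
    · exact Fin.ext (hf.2.trans hg.2.symm)
    · obtain ⟨k, rfl⟩ := Fin.exists_succAbove_eq hx
      exact congrFun hfg k

theorem card_powSumTuples_le (i d m : ℕ) : #(powSumTuples i d m) ≤ (i !) ^ 2 := by
  induction i generalizing m with
  | zero => exact (card_le_univ _).trans (by simp)
  | succ i ih =>
    set L := log 2 m
    have hcover : powSumTuples (i + 1) d m ⊆ (univ ×ˢ Icc (L + 1 - (i + 1)) L).biUnion
        fun p => {f ∈ powSumTuples (i + 1) d m | (f p.1 : ℕ) = p.2} := by
      intro f hf
      have hsum : ∑ j, 2 ^ (f j : ℕ) = m := (mem_filter.1 hf).2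
      obtain ⟨j, hj⟩ := exists_mem_Icc_log_sum_two_pow fun k => (f k : ℕ)
      rw [Fintype.card_fin, hsum] at hj
      exact mem_biUnion.2 ⟨(j, f j), mem_product.2 ⟨mem_univ j, hj⟩, mem_filter.2 ⟨hf, rfl⟩⟩
    calc #(powSumTuples (i + 1) d m)
        ≤ #(univ ×ˢ Icc (L + 1 - (i + 1)) L) * (i !) ^ 2 :=
          (card_le_card hcover).trans <| card_biUnion_le_card_mul _ _ _ fun p _ =>
            (card_powSumTuples_filter_eq_le i d m p.1 p.2).trans (ih _)
      _ ≤ (i + 1) * (i + 1) * (i !) ^ 2 := by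
          rw [card_product, Finset.card_univ, Fintype.card_fin, Nat.card_Icc]
          gcongr
          omega
      _ = ((i + 1)!) ^ 2 := by rw [factorial_succ]; ring

theorem stmt_8_general (i : ℕ) :
    ∃ C : ℕ, ∀ d m : ℕ, 0 < m →
      ((univ : Finset (Fin i → Fin (d + 1))).filter
          (fun f => ∑ j, 2 ^ ((f j : ℕ)) = m)).card ≤ C :=
  ⟨(i !) ^ 2, fun d m _ => card_powSumTuples_le i d m⟩

/-- The number `c_i(m)` of ordered `i`-tuples of elements of `{2^0,…,2^d}` summing to `m`
is bounded by a constant `C` depending only on `i` (not on `d` or `m`). -/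
theorem stmt_8 (i : ℕ) (hi : 1 ≤ i) :
    ∃ C : ℕ, ∀ d m : ℕ, 0 < m →
      ((univ : Finset (Fin i → Fin (d + 1))).filter
          (fun f => ∑ j, 2 ^ ((f j : ℕ)) = m)).card ≤ C :=
  stmt_8_general i
end

section
/- Consider the random walk on ℤ where each step adds a uniformly random element of {2^0, 2^1, ..., 2^d}. Its i-step transition probability satisfies P̂^i(u,v) = c_i(v−u)/(d+1)^i, where c_i(m) is the number of ordered ways to write m as a sum of i elements of {2^k}_{k=0}^d; hence max_{u,v} P̂^i(u,v) ≤ C_i/(d+1)^i for a constant C_i independent of d. -/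
open Finset

/-- One-step kernel of the random walk on ℤ adding a uniform element of `{2^0,…,2^d}`. -/
noncomputable def kangarooStep (d : ℕ) (u v : ℤ) : ℝ :=
  if ∃ k : Fin (d + 1), v - u = 2 ^ (k : ℕ) then 1 / (d + 1) else 0

/-- `i`-step transition probabilities of the walk. -/
noncomputable def kangarooIter (d : ℕ) : ℕ → ℤ → ℤ → ℝ
  | 0 => fun u v => if u = v then 1 else 0
  | i + 1 => fun u v => ∑' w : ℤ, kangarooIter d i u w * kangarooStep d w v

/-!
Conditioning on the last step gives `P̂^(i+1)(u, v) = (d+1)⁻¹ ∑ₖ P̂^i(u, v - 2^k)`, which is the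
recursion obeyed by `c_(i+1)(m) = ∑ₖ c_i(m - 2^k)`. For the bound, the largest summand `2^e` of a
representation of `m` as a sum of `i` powers of two satisfies `2^e ≤ m ≤ i 2^e`, so `e` takes at
most `i` values (as `i < 2^i`) and sits at one of `i` positions; deleting it gives
`c_i ≤ i² c_(i-1)`, hence `c_i ≤ (i!)²` uniformly in `d`.
-/

open scoped Nat

/-- The paper's `c_i(m)`. -/
def powSumCount (d i : ℕ) (m : ℤ) : ℕ :=
  #{f : Fin i → Fin (d + 1) | ∑ j, (2 : ℤ) ^ (f j : ℕ) = m}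

lemma two_pow_injective : Function.Injective fun k : ℕ => (2 : ℤ) ^ k :=
  pow_right_injective₀ two_pos (by norm_num)

lemma kangarooIter_succ (d i : ℕ) (u v : ℤ) :
    kangarooIter d (i + 1) u v =
      ∑ k : Fin (d + 1), kangarooIter d i u (v - 2 ^ (k : ℕ)) / (d + 1) := by
  have hsupp : ∀ w ∉ univ.image (fun k : Fin (d + 1) => v - 2 ^ (k : ℕ)),
      kangarooIter d i u w * kangarooStep d w v = 0 := by
    intro w hw
    rw [kangarooStep, if_neg, mul_zero]
    rintro ⟨k, hk⟩
    exact hw (mem_image.mpr ⟨k, mem_univ _, by omega⟩)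
  change ∑' w, kangarooIter d i u w * kangarooStep d w v = _
  rw [tsum_eq_sum hsupp,
    sum_image fun a _ b _ h => Fin.ext (two_pow_injective (sub_right_injective h))]
  refine sum_congr rfl fun k _ => ?_
  rw [kangarooStep, if_pos ⟨k, by ring⟩, mul_one_div]

lemma powSumCount_zero (d : ℕ) (m : ℤ) : powSumCount d 0 m = if m = 0 then 1 else 0 := by
  split_ifs with hm <;> simp [powSumCount, hm, eq_comm]

lemma card_sum_eq_and_apply_eq (d i : ℕ) (m : ℤ) (j : Fin (i + 1)) (e : Fin (d + 1)) :
    #{f : Fin (i + 1) → Fin (d + 1) | ∑ j, (2 : ℤ) ^ (f j : ℕ) = m ∧ f j = e} =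
      powSumCount d i (m - 2 ^ (e : ℕ)) := by
  refine card_nbij' j.removeNth (j.insertNth (α := fun _ => Fin (d + 1)) e) ?_ ?_ ?_ ?_
  · intro f hf
    simp only [coe_filter, mem_univ, true_and, Set.mem_ofPred_eq] at hf ⊢
    rw [Fin.sum_univ_succAbove _ j, hf.2] at hf
    simp only [Fin.removeNth_apply]
    linarith [hf.1]
  · intro f hf
    simp only [coe_filter, mem_univ, true_and, Set.mem_ofPred_eq] at hf ⊢
    rw [Fin.sum_univ_succAbove _ j]
    simp only [Fin.insertNth_apply_same, Fin.insertNth_apply_succAbove, hf]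
    exact ⟨by ring, trivial⟩
  · intro f hf
    simp only [coe_filter, mem_univ, true_and, Set.mem_ofPred_eq] at hf
    rw [← hf.2]
    exact Fin.insertNth_self_removeNth j f
  · intro f _
    exact Fin.removeNth_insertNth (α := fun _ => Fin (d + 1)) j e f

lemma powSumCount_succ (d i : ℕ) (m : ℤ) :
    powSumCount d (i + 1) m = ∑ e : Fin (d + 1), powSumCount d i (m - 2 ^ (e : ℕ)) := by
  rw [powSumCount, card_eq_sum_card_fiberwise (f := fun f => f 0) (t := univ) (by simp)]
  refine sum_congr rfl fun e _ => ?_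
  rw [← card_sum_eq_and_apply_eq d i m 0 e, filter_filter]

lemma kangarooIter_eq_powSumCount (d : ℕ) :
    ∀ (i : ℕ) (u v : ℤ), kangarooIter d i u v = powSumCount d i (v - u) / (d + 1) ^ i
  | 0, u, v => by
    simp only [kangarooIter, powSumCount_zero, sub_eq_zero, eq_comm (a := v)]
    split_ifs <;> simp
  | i + 1, u, v => by
    simp only [kangarooIter_succ, kangarooIter_eq_powSumCount d i,
      Nat.cast_sum, powSumCount_succ,
      sum_div, pow_succ, div_div, sub_right_comm]

/-- `s` lies in `[min s, min s + n]`, since `n + 1 < 2 ^ (n + 1)`. -/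
lemma card_le_of_two_pow_le_le (n : ℕ) (m : ℤ) (s : Finset ℕ)
    (hs : ∀ e ∈ s, 2 ^ e ≤ m ∧ m ≤ (n + 1) * 2 ^ e) : #s ≤ n + 1 := by
  rcases s.eq_empty_or_nonempty with rfl | hne
  · simp
  set e₀ := s.min' hne
  suffices s ⊆ Ico e₀ (e₀ + (n + 1)) by simpa using card_le_card this
  intro e he
  have hlt : (2 : ℤ) ^ e < 2 ^ (e₀ + (n + 1)) := calc
    (2 : ℤ) ^ e ≤ m := (hs e he).1
    _ ≤ (n + 1) * 2 ^ e₀ := (hs e₀ (s.min'_mem hne)).2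
    _ < 2 ^ (n + 1) * 2 ^ e₀ := by
      gcongr
      exact_mod_cast Nat.lt_two_pow_self
    _ = 2 ^ (e₀ + (n + 1)) := by rw [pow_add, mul_comm]; ring
  exact mem_Ico.mpr ⟨s.min'_le e he, (pow_lt_pow_iff_right₀ one_lt_two).mp hlt⟩

lemma exists_two_pow_le_sum_le_card_mul {ι : Type*} [Fintype ι] [Nonempty ι] (f : ι → ℕ) :
    ∃ j, (2 : ℤ) ^ f j ≤ ∑ j', (2 : ℤ) ^ f j' ∧ ∑ j', (2 : ℤ) ^ f j' ≤ Fintype.card ι * 2 ^ f j := by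
  obtain ⟨j, hj⟩ := Finite.exists_max f
  refine ⟨j, single_le_sum (f := fun j => (2 : ℤ) ^ f j) (fun _ _ => by positivity) (mem_univ j),
    ?_⟩
  simpa using sum_le_card_nsmul univ (fun j => (2 : ℤ) ^ f j) _
    fun j' _ => pow_le_pow_right₀ one_le_two (hj j')

lemma powSumCount_succ_le (d i B : ℕ) (hB : ∀ m, powSumCount d i m ≤ B) (m : ℤ) :
    powSumCount d (i + 1) m ≤ (i + 1) * ((i + 1) * B) := by
  set E := ({e : Fin (d + 1) | 2 ^ (e : ℕ) ≤ m ∧ m ≤ (i + 1) * 2 ^ (e : ℕ)} : Finset _)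
  have hE : #E ≤ i + 1 := by
    rw [← card_map Fin.valEmbedding]
    refine card_le_of_two_pow_le_le i m _ fun _ he => ?_
    obtain ⟨e, heE, rfl⟩ := mem_map.mp he
    exact (mem_filter.mp heE).2
  have hcover : ({f : Fin (i + 1) → Fin (d + 1) | ∑ j, (2 : ℤ) ^ (f j : ℕ) = m} : Finset _) ⊆
      univ.biUnion fun j => E.biUnion fun e =>
        {f : Fin (i + 1) → Fin (d + 1) | ∑ j, (2 : ℤ) ^ (f j : ℕ) = m ∧ f j = e} := by
    intro f hf
    rw [mem_filter] at hf
    obtain ⟨j, hlow, hup⟩ := exists_two_pow_le_sum_le_card_mul fun j => (f j : ℕ)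
    simp only [hf.2, Fintype.card_fin, Nat.cast_add, Nat.cast_one] at hlow hup
    simp only [mem_biUnion, mem_filter, mem_univ, true_and, E]
    exact ⟨j, f j, ⟨hlow, hup⟩, hf.2, rfl⟩
  calc powSumCount d (i + 1) m
      ≤ ∑ j : Fin (i + 1), ∑ e ∈ E, powSumCount d i (m - 2 ^ (e : ℕ)) := by
        refine (card_le_card hcover).trans (card_biUnion_le.trans (sum_le_sum fun j _ => ?_))
        refine card_biUnion_le.trans (le_of_eq (sum_congr rfl fun e _ => ?_))
        exact card_sum_eq_and_apply_eq d i m j e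
    _ ≤ ∑ _j : Fin (i + 1), #E * B := by
        gcongr with j _
        exact sum_le_card_nsmul _ _ _ fun e _ => hB _
    _ ≤ (i + 1) * ((i + 1) * B) := by
        rw [sum_const, Finset.card_univ, Fintype.card_fin, smul_eq_mul]
        gcongr

lemma powSumCount_le_factorial_sq (d : ℕ) : ∀ (i : ℕ) (m : ℤ), powSumCount d i m ≤ (i !) ^ 2
  | 0, m => by rw [powSumCount_zero]; split_ifs <;> simp
  | i + 1, m => by
    calc powSumCount d (i + 1) m ≤ (i + 1) * ((i + 1) * (i !) ^ 2) :=
          powSumCount_succ_le d i _ (powSumCount_le_factorial_sq d i) m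
      _ = ((i + 1)!) ^ 2 := by rw [Nat.factorial_succ]; ring

theorem stmt_9_general (i : ℕ) :
    (∀ d : ℕ, ∀ u v : ℤ,
      kangarooIter d i u v =
        (((univ : Finset (Fin i → Fin (d + 1))).filter
            (fun f => u + ∑ j, (2 : ℤ) ^ ((f j : ℕ)) = v)).card : ℝ) / (d + 1) ^ i) ∧
    ∃ C : ℝ, 0 < C ∧ ∀ d : ℕ, ∀ u v : ℤ,
      kangarooIter d i u v ≤ C / (d + 1) ^ i := by
  refine ⟨fun d u v => ?_, (i ! : ℝ) ^ 2, by positivity, fun d u v => ?_⟩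
  · rw [kangarooIter_eq_powSumCount, powSumCount]
    congr 4
    ext f
    constructor <;> intro h <;> linarith
  · rw [kangarooIter_eq_powSumCount]
    gcongr
    exact_mod_cast powSumCount_le_factorial_sq d i (v - u)

/-- `P̂^i(u,v) = c_i(v−u)/(d+1)^i` where `c_i(m)` counts ordered ways to write `m` as a sum
of `i` elements of `{2^k}_{k=0}^d`; consequently `max_{u,v} P̂^i(u,v) ≤ C_i/(d+1)^i`
for a constant `C_i` independent of `d`. -/
theorem stmt_9 (i : ℕ) (hi : 1 ≤ i) :
    (∀ d : ℕ, ∀ u v : ℤ,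
      kangarooIter d i u v =
        (((univ : Finset (Fin i → Fin (d + 1))).filter
            (fun f => u + ∑ j, (2 : ℤ) ^ ((f j : ℕ)) = v)).card : ℝ) / (d + 1) ^ i) ∧
    ∃ C : ℝ, 0 < C ∧ ∀ d : ℕ, ∀ u v : ℤ,
      kangarooIter d i u v ≤ C / (d + 1) ^ i :=
  stmt_9_general i
end
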